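/- Let d ≥ 1, let f : ℝ^d → ℝ be differentiable and L-gradient Lipschitz with L > 0, and suppose f(x) ≥ f⋆ for all x ∈ ℝ^d. Fix x₀ ∈ ℝ^d, ρ > 0, and an integer K ≥ 1. Run the S2P iterates with the dynamic step size α_k = |f(X_k + ρ s_k) − f(X_k − ρ s_k)|/(2ρLd). Then there exists an index j with 0 ≤ j ≤ K such that E[‖∇f(X_j)‖²] ≤ 4Ld(f(x₀) − f⋆)/K + L²d²ρ²/2. -/

import Mathlib

/-- The vector in `ℝ^d` with `+1` in coordinates where `e` is `true`
and `-1` where `e` is `false`; a Rademacher random vector is uniform over these. -/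
noncomputable def signVec {d : ℕ} (e : Fin d → Bool) : EuclideanSpace ℝ (Fin d) :=
  WithLp.toLp 2 (fun i => if e i then (1 : ℝ) else -1)

/-- The S2P iterates with the dynamic step size
`α_k = |f(X_k + ρ s_k) − f(X_k − ρ s_k)|/(2ρLd)`:
`X_0 = x0` and `X_{k+1} = X_k + α_k s_k` if
`f(X_k + α_k s_k) ≤ f(X_k − α_k s_k)`, else `X_{k+1} = X_k − α_k s_k`. -/
noncomputable def s2pDyn {d : ℕ} (f : EuclideanSpace ℝ (Fin d) → ℝ)
    (x0 : EuclideanSpace ℝ (Fin d)) (ρ L : ℝ) (s : ℕ → EuclideanSpace ℝ (Fin d)) :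
    ℕ → EuclideanSpace ℝ (Fin d)
  | 0 => x0
  | k + 1 =>
      let x := s2pDyn f x0 ρ L s k
      let α := |f (x + ρ • s k) - f (x - ρ • s k)| / (2 * ρ * L * d)
      if f (x + α • s k) ≤ f (x - α • s k) then x + α • s k else x - α • s k

/-!
For `L`-smooth `f` the central difference `f (x + ρ s) - f (x - ρ s)` is `2 ρ ⟪∇f x, s⟫` up to
`L ρ² ‖s‖²`, so the dynamic step size is within `ρ / 2` of the ideal step
`|⟪∇f x, s⟫| / (L d)`, and keeping the better of `x ± α s` lowers `f` by `⟪∇f x, s⟫² / (2 L d)`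
up to `L d ρ² / 8`. As `s_k` is independent of `X_k` and `𝔼 ⟪v, s⟫² = ‖v‖²` for a Rademacher
vector, the expected decrease is `𝔼 ‖∇f X_k‖² / (2 L d)`. Telescoping over `k < K` and using
`f ≥ f⋆` bounds the average, hence the least, of the `𝔼 ‖∇f X_k‖²`.
-/

open scoped RealInnerProductSpace BigOperators
open Finset

section Smooth

variable {E : Type*} [NormedAddCommGroup E] [InnerProductSpace ℝ E] [CompleteSpace E]
  {f : E → ℝ} {L : ℝ}

theorem hasDerivAt_apply_add_smul (hf : Differentiable ℝ f) (x v : E) (t : ℝ) :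
    HasDerivAt (fun t : ℝ => f (x + t • v)) ⟪gradient f (x + t • v), v⟫ t := by
  have hline : HasDerivAt (fun t : ℝ => x + t • v) v t := by
    simpa using ((hasDerivAt_id t).smul_const v).const_add x
  rw [inner_gradient_left]
  exact (hf (x + t • v)).hasFDerivAt.comp_hasDerivAt t hline

theorem abs_sub_sub_inner_gradient_le (hf : Differentiable ℝ f)
    (hlip : ∀ x y : E, ‖gradient f x - gradient f y‖ ≤ L * ‖x - y‖) (x v : E) :
    |f (x + v) - f x - ⟪gradient f x, v⟫| ≤ L / 2 * ‖v‖ ^ 2 := by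
  set g := fun t : ℝ => f (x + t • v) - f x - t * ⟪gradient f x, v⟫
  have hg : ∀ t, HasDerivAt g ⟪gradient f (x + t • v) - gradient f x, v⟫ t := fun t => by
    refine (((hasDerivAt_apply_add_smul hf x v t).sub_const (f x)).sub
      ((hasDerivAt_id' t).mul_const ⟪gradient f x, v⟫)).congr_deriv ?_
    rw [inner_sub_left, one_mul]
  have hB : ∀ t, HasDerivAt (fun t : ℝ => L / 2 * t ^ 2 * ‖v‖ ^ 2) (L * t * ‖v‖ ^ 2) t :=
    fun t => by
      refine (((hasDerivAt_pow 2 t).const_mul (L / 2)).mul_const (‖v‖ ^ 2)).congr_deriv ?_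
      simp only [Nat.cast_ofNat, pow_one, Nat.add_one_sub_one]
      ring
  have hbound : ∀ t ∈ Set.Ico (0 : ℝ) 1,
      ‖⟪gradient f (x + t • v) - gradient f x, v⟫‖ ≤ L * t * ‖v‖ ^ 2 := fun t ht => by
    calc ‖⟪gradient f (x + t • v) - gradient f x, v⟫‖
        ≤ ‖gradient f (x + t • v) - gradient f x‖ * ‖v‖ := norm_inner_le_norm _ _
      _ ≤ L * ‖t • v‖ * ‖v‖ := by
          gcongr
          simpa using hlip (x + t • v) x
      _ = L * t * ‖v‖ ^ 2 := by rw [norm_smul, Real.norm_of_nonneg ht.1]; ring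
  have := image_norm_le_of_norm_deriv_right_le_deriv_boundary
    (fun t _ => (hg t).continuousAt.continuousWithinAt) (fun t _ => (hg t).hasDerivWithinAt)
    (by simp [g]) hB hbound (Set.right_mem_Icc.2 zero_le_one)
  simpa [g] using this

theorem abs_sub_sub_two_inner_gradient_le (hf : Differentiable ℝ f)
    (hlip : ∀ x y : E, ‖gradient f x - gradient f y‖ ≤ L * ‖x - y‖) (x v : E) :
    |f (x + v) - f (x - v) - 2 * ⟪gradient f x, v⟫| ≤ L * ‖v‖ ^ 2 := by
  have hplus := abs_sub_sub_inner_gradient_le hf hlip x v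
  have hminus := abs_sub_sub_inner_gradient_le hf hlip x (-v)
  rw [← sub_eq_add_neg, inner_neg_right, norm_neg] at hminus
  calc |f (x + v) - f (x - v) - 2 * ⟪gradient f x, v⟫|
      = |(f (x + v) - f x - ⟪gradient f x, v⟫) - (f (x - v) - f x - -⟪gradient f x, v⟫)| := by
        ring_nf
    _ ≤ L / 2 * ‖v‖ ^ 2 + L / 2 * ‖v‖ ^ 2 := (abs_sub _ _).trans (add_le_add hplus hminus)
    _ = L * ‖v‖ ^ 2 := by ring

theorem min_le_sub_abs_inner_gradient_add (hf : Differentiable ℝ f)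
    (hlip : ∀ x y : E, ‖gradient f x - gradient f y‖ ≤ L * ‖x - y‖) (x v : E) :
    min (f (x + v)) (f (x - v)) ≤ f x - |⟪gradient f x, v⟫| + L / 2 * ‖v‖ ^ 2 := by
  have hplus := (abs_le.1 (abs_sub_sub_inner_gradient_le hf hlip x v)).2
  have hminus := (abs_le.1 (abs_sub_sub_inner_gradient_le hf hlip x (-v))).2
  rw [← sub_eq_add_neg, inner_neg_right, norm_neg] at hminus
  rcases abs_cases ⟪gradient f x, v⟫ with ⟨habs, -⟩ | ⟨habs, -⟩
  · exact (min_le_right _ _).trans (by linarith)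
  · exact (min_le_left _ _).trans (by linarith)

end Smooth

section Step

variable {E : Type*} [NormedAddCommGroup E] [InnerProductSpace ℝ E]

/-- `c` stands for `‖s‖ ^ 2`, which is `d` for a Rademacher direction `s`. -/
noncomputable def s2pStepSize (f : E → ℝ) (ρ L c : ℝ) (x s : E) : ℝ :=
  |f (x + ρ • s) - f (x - ρ • s)| / (2 * ρ * L * c)

noncomputable def s2pStep (f : E → ℝ) (ρ L c : ℝ) (x s : E) : E :=
  let α := s2pStepSize f ρ L c x s
  if f (x + α • s) ≤ f (x - α • s) then x + α • s else x - α • s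

theorem apply_s2pStep (f : E → ℝ) (ρ L c : ℝ) (x s : E) :
    f (s2pStep f ρ L c x s) =
      min (f (x + s2pStepSize f ρ L c x s • s)) (f (x - s2pStepSize f ρ L c x s • s)) := by
  rw [s2pStep, apply_ite f, min_def]

variable [CompleteSpace E] {f : E → ℝ} {L ρ c : ℝ}

theorem abs_mul_s2pStepSize_sub_le (hf : Differentiable ℝ f)
    (hlip : ∀ x y : E, ‖gradient f x - gradient f y‖ ≤ L * ‖x - y‖) (hL : 0 < L) (hρ : 0 < ρ)
    (x s : E) (hs : ‖s‖ ^ 2 = c) (hc : 0 < c) :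
    |L * c * s2pStepSize f ρ L c x s - (|⟪gradient f x, s⟫|)| ≤ L * c * ρ / 2 := by
  have hdiff := abs_sub_sub_two_inner_gradient_le hf hlip x (ρ • s)
  rw [real_inner_smul_right, norm_smul, Real.norm_of_nonneg hρ.le, mul_pow, hs] at hdiff
  have hrw : L * c * s2pStepSize f ρ L c x s - |⟪gradient f x, s⟫|
      = (|f (x + ρ • s) - f (x - ρ • s)| - |2 * ρ * ⟪gradient f x, s⟫|) / (2 * ρ) := by
    rw [s2pStepSize, abs_mul, abs_of_pos (by positivity : (0 : ℝ) < 2 * ρ)]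
    field_simp
  rw [hrw, abs_div, abs_of_pos (by positivity : (0 : ℝ) < 2 * ρ), div_le_iff₀ (by positivity)]
  calc |(|f (x + ρ • s) - f (x - ρ • s)| - |2 * ρ * ⟪gradient f x, s⟫|)|
      ≤ |f (x + ρ • s) - f (x - ρ • s) - 2 * (ρ * ⟪gradient f x, s⟫)| := by
        rw [← mul_assoc]; exact abs_abs_sub_abs_le_abs_sub _ _
    _ ≤ L * (ρ ^ 2 * c) := hdiff
    _ = L * c * ρ / 2 * (2 * ρ) := by ring

theorem inner_gradient_sq_le_sub_apply_s2pStep (hf : Differentiable ℝ f)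
    (hlip : ∀ x y : E, ‖gradient f x - gradient f y‖ ≤ L * ‖x - y‖) (hL : 0 < L) (hρ : 0 < ρ)
    (x s : E) (hs : ‖s‖ ^ 2 = c) (hc : 0 < c) :
    ⟪gradient f x, s⟫ ^ 2
      ≤ 2 * L * c * (f x - f (s2pStep f ρ L c x s)) + L ^ 2 * c ^ 2 * ρ ^ 2 / 4 := by
  set α := s2pStepSize f ρ L c x s
  have hα : 0 ≤ α := by unfold α s2pStepSize; positivity
  have hmin := min_le_sub_abs_inner_gradient_add hf hlip x (α • s)
  rw [real_inner_smul_right, abs_mul, abs_of_nonneg hα, norm_smul, Real.norm_of_nonneg hα,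
    mul_pow, hs, ← apply_s2pStep f] at hmin
  have hclose := abs_mul_s2pStepSize_sub_le hf hlip hL hρ x s hs hc
  have hsq : (L * c * α - |⟪gradient f x, s⟫|) ^ 2 ≤ (L * c * ρ / 2) ^ 2 := by
    rw [← sq_abs]
    exact pow_le_pow_left₀ (abs_nonneg _) hclose 2
  -- `(L c α - |g|)² = g² - 2 L c (α |g| - L c α² / 2)`, and `f x - f step ≥ α |g| - L c α² / 2`
  nlinarith [mul_le_mul_of_nonneg_left hmin (by positivity : (0 : ℝ) ≤ 2 * L * c),
    sq_abs ⟪gradient f x, s⟫]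

end Step

section Rademacher

variable {d : ℕ}

theorem signVec_apply_mul_self (e : Fin d → Bool) (i : Fin d) :
    signVec e i * signVec e i = 1 := by
  cases h : e i <;> simp [signVec, h]

theorem norm_signVec_sq (e : Fin d → Bool) : ‖signVec e‖ ^ 2 = d := by
  simp_rw [EuclideanSpace.real_norm_sq_eq, sq, signVec_apply_mul_self]
  simp

theorem expect_signVec_apply_mul_of_ne {i j : Fin d} (hij : i ≠ j) :
    𝔼 e : Fin d → Bool, signVec e i * signVec e j = 0 := by
  classical
  set toggle : (Fin d → Bool) → Fin d → Bool := fun e => Function.update e i (!e i)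
  have htoggle : Function.Involutive toggle := fun e => by simp [toggle]
  have hneg : ∀ e, signVec (toggle e) i * signVec (toggle e) j = -(signVec e i * signVec e j) :=
    fun e => by
      cases hi : e i <;> cases hj : e j <;>
        simp [toggle, signVec, hi, hj, Function.update_of_ne hij.symm]
  have := Fintype.expect_equiv htoggle.toPerm (fun e => -(signVec e i * signVec e j))
    (fun e => signVec e i * signVec e j) (fun e => (hneg e).symm)
  rw [expect_neg_distrib] at this
  linarith

theorem expect_inner_signVec_sq (v : EuclideanSpace ℝ (Fin d)) :
    𝔼 e : Fin d → Bool, ⟪v, signVec e⟫ ^ 2 = ‖v‖ ^ 2 := by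
  have hinner : ∀ e, ⟪v, signVec e⟫ = ∑ i, v i * signVec e i := fun e => by
    simp [PiLp.inner_apply, mul_comm]
  calc 𝔼 e : Fin d → Bool, ⟪v, signVec e⟫ ^ 2
      = ∑ i, ∑ j, v i * v j * 𝔼 e : Fin d → Bool, signVec e i * signVec e j := by
        simp_rw [hinner, sq, sum_mul_sum, expect_sum_comm, mul_expect]
        refine sum_congr rfl fun i _ => sum_congr rfl fun j _ => expect_congr rfl fun e _ => ?_
        ring
    _ = ∑ i, v i * v i := by
        refine sum_congr rfl fun i _ => ?_
        rw [sum_eq_single i (fun j _ hji => by rw [expect_signVec_apply_mul_of_ne hji.symm,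
          mul_zero]) (by simp)]
        simp [signVec_apply_mul_self]
    _ = ‖v‖ ^ 2 := by simp_rw [EuclideanSpace.real_norm_sq_eq, sq]

end Rademacher

theorem expect_apply_eval_eq_expect_expect {ι α M : Type*} [Fintype ι] [DecidableEq ι]
    [Fintype α] [Nonempty α] [AddCommMonoid M] [Module ℚ≥0 M] (k : ι) (φ : (ι → α) → α → M)
    (hφ : ∀ ω a b, φ (Function.update ω k b) a = φ ω a) :
    𝔼 ω, φ ω (ω k) = 𝔼 ω, 𝔼 a, φ ω a := by
  set σ := Equiv.funSplitAt k α
  have hsplit : ∀ F : (ι → α) → M, 𝔼 ω, F ω = 𝔼 a, 𝔼 r, F (σ.symm (a, r)) := fun F => by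
    rw [Fintype.expect_equiv σ F (fun p => F (σ.symm p))
      fun ω => by rw [σ.symm_apply_apply], ← univ_product_univ,
      expect_product' univ univ fun a r => F (σ.symm (a, r))]
  have heval : ∀ a r, σ.symm (a, r) k = a := fun a r => by
    simp [σ, Equiv.funSplitAt_symm_apply]
  have hresample : ∀ a b r, φ (σ.symm (b, r)) a = φ (σ.symm (a, r)) a := fun a b r => by
    rw [← hφ (σ.symm (a, r)) a b]
    congr 1
    funext j
    by_cases hj : j = k
    · subst hj; simp [heval]
    · simp [σ, Equiv.funSplitAt_symm_apply, hj]
  calc 𝔼 ω, φ ω (ω k) = 𝔼 a, 𝔼 r, φ (σ.symm (a, r)) a := by simp_rw [hsplit, heval]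
    _ = 𝔼 r, 𝔼 a, φ (σ.symm (a, r)) a := expect_comm _ _ _
    _ = 𝔼 _b : α, 𝔼 r, 𝔼 a, φ (σ.symm (a, r)) a := (Fintype.expect_const _).symm
    _ = 𝔼 b, 𝔼 r, 𝔼 a, φ (σ.symm (b, r)) a :=
        expect_congr rfl fun b _ => expect_congr rfl fun r _ =>
          expect_congr rfl fun a _ => (hresample a b r).symm
    _ = 𝔼 ω, 𝔼 a, φ ω a := (hsplit fun ω => 𝔼 a, φ ω a).symm

theorem exists_le_of_le_mul_sub_succ_add {T S : ℕ → ℝ} {a b m : ℝ} {K : ℕ} (hK : 0 < K)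
    (ha : 0 ≤ a) (hm : m ≤ S K) (h : ∀ k < K, T k ≤ a * (S k - S (k + 1)) + b) :
    ∃ j < K, T j ≤ a * (S 0 - m) / K + b := by
  have hsum : ∑ k ∈ range K, T k ≤ ∑ _k ∈ range K, (a * (S 0 - m) / K + b) :=
    calc ∑ k ∈ range K, T k ≤ ∑ k ∈ range K, (a * (S k - S (k + 1)) + b) :=
          sum_le_sum fun k hk => h k (mem_range.1 hk)
      _ = a * (S 0 - S K) + K * b := by
          rw [sum_add_distrib, ← mul_sum, sum_range_sub', sum_const, card_range, nsmul_eq_mul]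
      _ ≤ a * (S 0 - m) + K * b := by gcongr
      _ = ∑ _k ∈ range K, (a * (S 0 - m) / K + b) := by
          rw [sum_const, card_range, nsmul_eq_mul]
          field_simp
  obtain ⟨j, hj, hle⟩ := exists_le_of_sum_le (nonempty_range_iff.2 hK.ne') hsum
  exact ⟨j, mem_range.1 hj, hle⟩

theorem expect_norm_gradient_sq_le_sub_s2pStep {ι : Type*} [Fintype ι] [DecidableEq ι] {d : ℕ}
    (hd : 0 < d) {f : EuclideanSpace ℝ (Fin d) → ℝ} {L ρ : ℝ} (hf : Differentiable ℝ f)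
    (hlip : ∀ x y, ‖gradient f x - gradient f y‖ ≤ L * ‖x - y‖) (hL : 0 < L) (hρ : 0 < ρ)
    (k : ι) (X : (ι → Fin d → Bool) → EuclideanSpace ℝ (Fin d))
    (hX : ∀ ω e, X (Function.update ω k e) = X ω) :
    𝔼 ω, ‖gradient f (X ω)‖ ^ 2
      ≤ 2 * L * d * (𝔼 ω, f (X ω) - 𝔼 ω, f (s2pStep f ρ L d (X ω) (signVec (ω k))))
        + L ^ 2 * d ^ 2 * ρ ^ 2 / 4 := by
  have hinner : 𝔼 ω, ⟪gradient f (X ω), signVec (ω k)⟫ ^ 2 = 𝔼 ω, ‖gradient f (X ω)‖ ^ 2 := by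
    rw [expect_apply_eval_eq_expect_expect k (fun ω e => ⟪gradient f (X ω), signVec e⟫ ^ 2)
      (fun ω e b => by rw [hX])]
    simp_rw [expect_inner_signVec_sq]
  calc 𝔼 ω, ‖gradient f (X ω)‖ ^ 2 = 𝔼 ω, ⟪gradient f (X ω), signVec (ω k)⟫ ^ 2 := hinner.symm
    _ ≤ 𝔼 ω, (2 * L * d * (f (X ω) - f (s2pStep f ρ L d (X ω) (signVec (ω k))))
          + L ^ 2 * d ^ 2 * ρ ^ 2 / 4) :=
        expect_le_expect fun ω _ => inner_gradient_sq_le_sub_apply_s2pStep hf hlip hL hρ _ _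
          (norm_signVec_sq _) (by exact_mod_cast hd)
    _ = _ := by rw [expect_add_distrib, ← mul_expect, expect_sub_distrib, Fintype.expect_const]

section Iterates

variable {d : ℕ} {f : EuclideanSpace ℝ (Fin d) → ℝ} {x0 : EuclideanSpace ℝ (Fin d)} {ρ L : ℝ}

theorem s2pDyn_succ (s : ℕ → EuclideanSpace ℝ (Fin d)) (k : ℕ) :
    s2pDyn f x0 ρ L s (k + 1) = s2pStep f ρ L d (s2pDyn f x0 ρ L s k) (s k) :=
  rfl

theorem s2pDyn_congr {s s' : ℕ → EuclideanSpace ℝ (Fin d)} :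
    ∀ {k}, (∀ i < k, s i = s' i) → s2pDyn f x0 ρ L s k = s2pDyn f x0 ρ L s' k
  | 0, _ => rfl
  | k + 1, h => by
    rw [s2pDyn_succ, s2pDyn_succ, s2pDyn_congr fun i hi => h i (Nat.lt_succ_of_lt hi),
      h k (Nat.lt_succ_self k)]

variable {K : ℕ}

noncomputable def signSeq (ω : Fin K → Fin d → Bool) : ℕ → EuclideanSpace ℝ (Fin d) :=
  fun k => if h : k < K then signVec (ω ⟨k, h⟩) else 0

theorem signSeq_of_lt (ω : Fin K → Fin d → Bool) {k : ℕ} (hk : k < K) :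
    signSeq ω k = signVec (ω ⟨k, hk⟩) :=
  dif_pos hk

theorem s2pDyn_signSeq_update (ω : Fin K → Fin d → Bool) {k : ℕ} (hk : k < K)
    (e : Fin d → Bool) :
    s2pDyn f x0 ρ L (signSeq (Function.update ω ⟨k, hk⟩ e)) k = s2pDyn f x0 ρ L (signSeq ω) k :=
  s2pDyn_congr fun i hi => by
    rw [signSeq_of_lt _ (hi.trans hk), signSeq_of_lt _ (hi.trans hk), Function.update_of_ne]
    exact Fin.ne_of_val_ne hi.ne

theorem expect_norm_gradient_sq_s2pDyn_le (hd : 0 < d) (hf : Differentiable ℝ f)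
    (hlip : ∀ x y, ‖gradient f x - gradient f y‖ ≤ L * ‖x - y‖) (hL : 0 < L) (hρ : 0 < ρ)
    {k : ℕ} (hk : k < K) :
    𝔼 ω : Fin K → Fin d → Bool, ‖gradient f (s2pDyn f x0 ρ L (signSeq ω) k)‖ ^ 2
      ≤ 2 * L * d * (𝔼 ω : Fin K → Fin d → Bool, f (s2pDyn f x0 ρ L (signSeq ω) k)
          - 𝔼 ω : Fin K → Fin d → Bool, f (s2pDyn f x0 ρ L (signSeq ω) (k + 1)))
        + L ^ 2 * d ^ 2 * ρ ^ 2 / 4 := by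
  simpa only [s2pDyn_succ, signSeq_of_lt _ hk] using
    expect_norm_gradient_sq_le_sub_s2pStep hd hf hlip hL hρ ⟨k, hk⟩
      (fun ω => s2pDyn f x0 ρ L (signSeq ω) k) fun ω e => s2pDyn_signSeq_update ω hk e

end Iterates

/-- The `K` independent Rademacher vectors are modelled by a uniform sample
`ω : Fin K → Fin d → Bool`, and expectations are uniform averages over all such `ω`. -/
theorem stmt8 (d : ℕ) (hd : 1 ≤ d) (f : EuclideanSpace ℝ (Fin d) → ℝ) (L : ℝ) (hL : 0 < L)
    (hdiff : Differentiable ℝ f)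
    (hlip : ∀ x y : EuclideanSpace ℝ (Fin d),
      ‖gradient f x - gradient f y‖ ≤ L * ‖x - y‖)
    (fstar : ℝ) (hbdd : ∀ x, fstar ≤ f x)
    (x0 : EuclideanSpace ℝ (Fin d)) (ρ : ℝ) (hρ : 0 < ρ)
    (K : ℕ) (hK : 1 ≤ K) :
    ∃ j ≤ K,
      (∑ ω : Fin K → Fin d → Bool,
          ‖gradient f
            (s2pDyn f x0 ρ L
              (fun k => if h : k < K then signVec (ω ⟨k, h⟩) else 0) j)‖ ^ 2)
          / (Fintype.card (Fin K → Fin d → Bool) : ℝ)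
        ≤ 4 * L * d * (f x0 - fstar) / K + L ^ 2 * d ^ 2 * ρ ^ 2 / 2 := by
  have hLd : (0 : ℝ) < 2 * L * d := by positivity
  obtain ⟨j, hj, hle⟩ := exists_le_of_le_mul_sub_succ_add
    (T := fun k => 𝔼 ω, ‖gradient f (s2pDyn f x0 ρ L (signSeq ω) k)‖ ^ 2)
    (S := fun k => 𝔼 ω, f (s2pDyn f x0 ρ L (signSeq ω) k)) hK hLd.le
    (expect_le_expect fun ω _ => hbdd _)
    fun k hk => expect_norm_gradient_sq_s2pDyn_le hd hdiff hlip hL hρ hk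
  refine ⟨j, hj.le, ?_⟩
  simp only [s2pDyn, Fintype.expect_const] at hle
  rw [← Fintype.expect_eq_sum_div_card]
  have hgap : 0 ≤ 2 * L * d * (f x0 - fstar) := mul_nonneg hLd.le (sub_nonneg.2 (hbdd x0))
  have hnoise : 0 ≤ L ^ 2 * d ^ 2 * ρ ^ 2 := by positivity
  refine hle.trans (add_le_add (div_le_div_of_nonneg_right ?_ K.cast_nonneg) ?_) <;> linarith
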